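/- arXiv:2006.05334 — 3 statements merged into one kernel-verified Lean document; each statement's English description precedes it below -/
import Mathlib

section
/- Let s be an infinite equivalence class of the relation on S_V ⊆ ℚ given by 'finitely many elements of S_V strictly between'. Then s is discrete: for each r ∈ s there exists a positive rational δ such that the open interval (r − δ, r + δ) contains no element of s other than r. -/
/-! The relation is transitive, because a point strictly between `a` and `c` lies strictly between
`a` and `b`, strictly between `b` and `c`, or equals `b`. So for `r` and any `x` in the same class,
only finitely many points of the class lie between `r` and `x`. A finite set not containing `r`
stays away from `r`; hence on each side of `r` a small interval misses the class. -/

def BtwFin (S_V : Set ℚ) (a b : ℚ) : Prop :=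
  {x : ℚ | x ∈ S_V ∧ min a b < x ∧ x < max a b}.Finite

open Set Filter Topology

theorem Set.uIoo_subset_insert_uIoo_union_uIoo {α : Type*} [LinearOrder α] (a b c : α) :
    uIoo a c ⊆ insert b (uIoo a b ∪ uIoo b c) := by
  intro x hx
  simp only [uIoo, mem_Ioo, mem_insert_iff, mem_union] at *
  rcases lt_trichotomy x b with h | h | h <;> grind

section IsolatedPoint

variable {α : Type*} [TopologicalSpace α] [LinearOrder α] [OrderTopology α] {s : Set α} {r : α}

theorem eventually_nhdsGT_notMem_of_finite_Ioo (h : ∀ x ∈ s, (s ∩ Ioo r x).Finite) :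
    ∀ᶠ x in 𝓝[>] r, x ∉ s := by
  by_cases hs : ∃ y ∈ s, r < y
  · obtain ⟨y, hy, hry⟩ := hs
    have hF : ∀ᶠ x in 𝓝 r, x ∉ s ∩ Ioo r y :=
      (h y hy).isClosed.compl_mem_nhds fun hr => lt_irrefl r hr.2.1
    filter_upwards [Ioo_mem_nhdsGT hry, nhdsWithin_le_nhds hF] with x hx hxF hxs
      using hxF ⟨hxs, hx⟩
  · push Not at hs
    filter_upwards [self_mem_nhdsWithin] with x (hx : r < x) hxs using (hs x hxs).not_gt hx

theorem eventually_nhdsLT_notMem_of_finite_Ioo (h : ∀ x ∈ s, (s ∩ Ioo x r).Finite) :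
    ∀ᶠ x in 𝓝[<] r, x ∉ s :=
  eventually_nhdsGT_notMem_of_finite_Ioo (α := αᵒᵈ) (s := OrderDual.ofDual ⁻¹' s)
    fun x hx => ((h x hx).preimage OrderDual.ofDual.injective.injOn).subset
      fun _ hy => ⟨hy.1, hy.2.2, hy.2.1⟩

theorem eventually_nhds_mem_imp_eq_of_finite_uIoo (h : ∀ x ∈ s, (s ∩ uIoo r x).Finite) :
    ∀ᶠ x in 𝓝 r, x ∈ s → x = r := by
  have hlt := eventually_nhdsLT_notMem_of_finite_Ioo fun x hx =>
    (h x hx).subset (inter_subset_inter_right s Ioo_subset_uIoo')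
  have hgt := eventually_nhdsGT_notMem_of_finite_Ioo fun x hx =>
    (h x hx).subset (inter_subset_inter_right s Ioo_subset_uIoo)
  have hne : ∀ᶠ x in 𝓝[≠] r, x ∉ s := nhdsLT_sup_nhdsGT r ▸ eventually_sup.mpr ⟨hlt, hgt⟩
  filter_upwards [eventually_nhdsWithin_iff.mp hne] with x hx hxs
  by_contra hxr
  exact hx hxr hxs

end IsolatedPoint

theorem btwFin_iff_finite_inter_uIoo {S : Set ℚ} {a b : ℚ} :
    BtwFin S a b ↔ (S ∩ uIoo a b).Finite :=
  Iff.rfl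

namespace BtwFin

variable {S : Set ℚ} {a b c : ℚ}

theorem symm (h : BtwFin S a b) : BtwFin S b a := by
  rw [btwFin_iff_finite_inter_uIoo, uIoo_comm]
  exact h

theorem trans (hab : BtwFin S a b) (hbc : BtwFin S b c) : BtwFin S a c := by
  rw [btwFin_iff_finite_inter_uIoo] at *
  refine ((hab.union hbc).insert b).subset fun y ⟨hyS, hy⟩ => ?_
  rcases uIoo_subset_insert_uIoo_union_uIoo a b c hy with rfl | hy | hy
  exacts [mem_insert y _, Or.inr (Or.inl ⟨hyS, hy⟩), Or.inr (Or.inr ⟨hyS, hy⟩)]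

end BtwFin

theorem infinite_class_discrete_general (S_V : Set ℚ) (a : ℚ)
    (r : ℚ) (hr : r ∈ S_V ∧ BtwFin S_V a r) :
    ∃ δ : ℚ, 0 < δ ∧
      ∀ x : ℚ, (x ∈ S_V ∧ BtwFin S_V a x) → r - δ < x → x < r + δ → x = r := by
  set C := {x | x ∈ S_V ∧ BtwFin S_V a x}
  have hC : ∀ x ∈ C, (C ∩ uIoo r x).Finite := fun x hx =>
    (hr.2.symm.trans hx.2).subset (inter_subset_inter_left _ fun y hy => hy.1)
  obtain ⟨δ, hδ, hball⟩ :=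
    (nhds_basis_Ioo_pos r).eventually_iff.mp (eventually_nhds_mem_imp_eq_of_finite_uIoo hC)
  exact ⟨δ, hδ, fun x hx h₁ h₂ => hball ⟨h₁, h₂⟩ hx⟩

/-- An infinite equivalence class `s` of the relation "finitely many elements of `S_V`
strictly between" is discrete: each of its points `r` is isolated, i.e. some interval
`(r - δ, r + δ)` with `δ > 0` meets `s` only in `r`. -/
theorem infinite_class_discrete (S_V : Set ℚ) (a : ℚ) (ha : a ∈ S_V)
    (hinf : {b : ℚ | b ∈ S_V ∧ BtwFin S_V a b}.Infinite)
    (r : ℚ) (hr : r ∈ S_V ∧ BtwFin S_V a r) :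
    ∃ δ : ℚ, 0 < δ ∧
      ∀ x : ℚ, (x ∈ S_V ∧ BtwFin S_V a x) → r - δ < x → x < r + δ → x = r :=
  infinite_class_discrete_general S_V a r hr
end

section
/- Let A and B be countable dense subsets of ℚ such that both A and ℚ \ A are dense in ℚ, and both B and ℚ \ B are dense in ℚ. Then there exists an order automorphism α of (ℚ, ≤) with α(A) = B. -/
/-- `U` is a dense subset of `(ℚ, ≤)`: every open interval contains a point of `U`. -/
def DenseIn (U : Set ℚ) : Prop := ∀ a b : ℚ, a < b → ∃ c ∈ U, a < c ∧ c < b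

/-!
Back and forth. Call a finite partial order isomorphism between `α` and `β` *coloured* if it
maps points of `A` to points of `B` and points outside `A` to points outside `B`. Since `B` and
`Bᶜ` are both dense and `β` has no endpoints, every gap left by a finite partial isomorphism
contains points of both colours, so a coloured partial isomorphism extends to any new point of
`α`, and symmetrically of `β`. Enumerating both countable orders, the union of a chain of such
extensions is an order isomorphism mapping `A` onto `B`.
-/

section

variable {β : Type*} [LinearOrder β]

def Set.OrderDense (s : Set β) : Prop := ∀ a b, a < b → ∃ c ∈ s, a < c ∧ c < b

theorem Set.OrderDense.exists_mem_between_finsets [NoMinOrder β] [NoMaxOrder β] [Nonempty β]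
    {s : Set β} (hs : s.OrderDense) {lo hi : Finset β} (h : ∀ x ∈ lo, ∀ y ∈ hi, x < y) :
    ∃ m ∈ s, (∀ x ∈ lo, x < m) ∧ ∀ y ∈ hi, m < y := by
  have : DenselyOrdered β := ⟨fun a b hab => (hs a b hab).imp fun _ hc => hc.2⟩
  obtain ⟨l, hlo, hlhi⟩ := Order.exists_between_finsets lo hi h
  obtain ⟨u, hlu, huhi⟩ := Order.exists_between_finsets {l} hi (by simpa using hlhi)
  obtain ⟨m, hm, hlm, hmu⟩ := hs l u (hlu l (Finset.mem_singleton_self l))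
  exact ⟨m, hm, fun x hx => (hlo x hx).trans hlm, fun y hy => hmu.trans (huhi y hy)⟩

end

noncomputable section

namespace Order

variable {α β : Type*} [LinearOrder α] [LinearOrder β]

namespace PartialIso

theorem exists_across_mem [NoMinOrder β] [NoMaxOrder β] [Nonempty β] {s : Set β}
    (hs : s.OrderDense) (f : PartialIso α β) {a : α} (ha : ∀ b, (a, b) ∉ f.val) :
    ∃ b ∈ s, ∀ p ∈ f.val, cmp p.1 a = cmp p.2 b := by
  have lo_lt_hi : ∀ x ∈ {p ∈ f.val | p.1 < a}.image Prod.snd,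
      ∀ y ∈ {p ∈ f.val | a < p.1}.image Prod.snd, x < y := by
    simp only [Finset.mem_image, Finset.mem_filter]
    rintro _ ⟨p, ⟨hp, hpa⟩, rfl⟩ _ ⟨q, ⟨hq, haq⟩, rfl⟩
    rw [← lt_iff_lt_of_cmp_eq_cmp (f.prop p hp q hq)]
    exact hpa.trans haq
  obtain ⟨b, hbs, hlo, hhi⟩ := hs.exists_mem_between_finsets lo_lt_hi
  refine ⟨b, hbs, fun p hp => ?_⟩
  have hpa : p.1 ≠ a := fun h => ha p.2 (h ▸ hp)
  rcases hpa.lt_or_gt with hpa | hap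
  · have hpb : p.2 < b := hlo _ (Finset.mem_image_of_mem _ (Finset.mem_filter.2 ⟨hp, hpa⟩))
    rw [(cmp_eq_lt_iff _ _).2 hpa, (cmp_eq_lt_iff _ _).2 hpb]
  · have hbp : b < p.2 := hhi _ (Finset.mem_image_of_mem _ (Finset.mem_filter.2 ⟨hp, hap⟩))
    rw [(cmp_eq_gt_iff _ _).2 hap, (cmp_eq_gt_iff _ _).2 hbp]

theorem mem_comm {f : PartialIso α β} {a : α} {b : β} :
    (b, a) ∈ f.comm.val ↔ (a, b) ∈ f.val := by
  simp [PartialIso.comm, Subtype.map]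

def insert (f : PartialIso α β) (a : α) (b : β) (h : ∀ p ∈ f.val, cmp p.1 a = cmp p.2 b) :
    PartialIso α β :=
  ⟨Insert.insert (a, b) f.val, by
    simp only [Finset.mem_insert]
    rintro p (rfl | hp) q (rfl | hq)
    · simp only [cmp_self_eq_eq]
    · rw [cmp_eq_cmp_symm]
      exact h q hq
    · exact h p hp
    · exact f.prop p hp q hq⟩

end PartialIso

def ColoredPartialIso (A : Set α) (B : Set β) : Type _ :=
  { f : PartialIso α β // ∀ p ∈ f.val, p.1 ∈ A ↔ p.2 ∈ B }

namespace ColoredPartialIso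

variable {A : Set α} {B : Set β}

instance : Preorder (ColoredPartialIso A B) := Subtype.preorder _

instance : Inhabited (ColoredPartialIso A B) :=
  ⟨⟨default, fun _ hp => absurd hp (Finset.notMem_empty _)⟩⟩

protected def comm (f : ColoredPartialIso A B) : ColoredPartialIso B A :=
  ⟨f.val.comm, fun ⟨_, _⟩ hp => (f.prop _ (PartialIso.mem_comm.1 hp)).symm⟩

def insert (f : ColoredPartialIso A B) (a : α) (b : β) (hab : a ∈ A ↔ b ∈ B)
    (h : ∀ p ∈ f.val.val, cmp p.1 a = cmp p.2 b) : ColoredPartialIso A B :=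
  ⟨f.val.insert a b h, Finset.forall_mem_insert _ _ _ |>.2 ⟨hab, f.prop⟩⟩

theorem le_insert (f : ColoredPartialIso A B) (a : α) (b : β) (hab : a ∈ A ↔ b ∈ B)
    (h : ∀ p ∈ f.val.val, cmp p.1 a = cmp p.2 b) : f ≤ f.insert a b hab h :=
  Finset.subset_insert _ _

theorem mem_insert_self (f : ColoredPartialIso A B) (a : α) (b : β) (hab : a ∈ A ↔ b ∈ B)
    (h : ∀ p ∈ f.val.val, cmp p.1 a = cmp p.2 b) : (a, b) ∈ (f.insert a b hab h).val.val :=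
  Finset.mem_insert_self _ _

section

variable [NoMinOrder β] [NoMaxOrder β] [Nonempty β]

theorem exists_across (hB : B.OrderDense) (hBc : Bᶜ.OrderDense) (f : ColoredPartialIso A B)
    (a : α) : ∃ b, (a ∈ A ↔ b ∈ B) ∧ ∀ p ∈ f.val.val, cmp p.1 a = cmp p.2 b := by
  by_cases hdom : ∃ b, (a, b) ∈ f.val.val
  · obtain ⟨b, hb⟩ := hdom
    exact ⟨b, f.prop _ hb, fun p hp => f.val.prop p hp _ hb⟩
  push Not at hdom
  have hdense : {b | a ∈ A ↔ b ∈ B}.OrderDense := by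
    by_cases ha : a ∈ A
    · simp only [ha, true_iff]
      exact hB
    · simp only [ha, false_iff]
      exact hBc
  exact f.val.exists_across_mem hdense hdom

def definedAtLeft (hB : B.OrderDense) (hBc : Bᶜ.OrderDense) (a : α) :
    Cofinal (ColoredPartialIso A B) where
  carrier := {f | ∃ b, (a, b) ∈ f.val.val}
  isCofinal f := by
    obtain ⟨b, hab, h⟩ := exists_across hB hBc f a
    exact ⟨f.insert a b hab h, ⟨b, mem_insert_self ..⟩, le_insert ..⟩

end

variable [NoMinOrder α] [NoMaxOrder α] [Nonempty α]

theorem exists_across_right (hA : A.OrderDense) (hAc : Aᶜ.OrderDense) (f : ColoredPartialIso A B)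
    (b : β) : ∃ a, (a ∈ A ↔ b ∈ B) ∧ ∀ p ∈ f.val.val, cmp p.1 a = cmp p.2 b := by
  obtain ⟨a, hab, h⟩ := exists_across hA hAc f.comm b
  exact ⟨a, hab.symm, fun p hp => (h (p.2, p.1) (PartialIso.mem_comm.2 hp)).symm⟩

def definedAtRight (hA : A.OrderDense) (hAc : Aᶜ.OrderDense) (b : β) :
    Cofinal (ColoredPartialIso A B) where
  carrier := {f | ∃ a, (a, b) ∈ f.val.val}
  isCofinal f := by
    obtain ⟨a, hab, h⟩ := exists_across_right hA hAc f b
    exact ⟨f.insert a b hab h, ⟨a, mem_insert_self ..⟩, le_insert ..⟩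

end ColoredPartialIso

theorem exists_orderIso_image_eq [Countable α] [NoMinOrder α] [NoMaxOrder α] [Nonempty α]
    [Countable β] [NoMinOrder β] [NoMaxOrder β] [Nonempty β] {A : Set α} {B : Set β}
    (hA : A.OrderDense) (hAc : Aᶜ.OrderDense) (hB : B.OrderDense) (hBc : Bᶜ.OrderDense) :
    ∃ e : α ≃o β, e '' A = B := by
  open ColoredPartialIso in
  cases nonempty_encodable α
  cases nonempty_encodable β
  let D : α ⊕ β → Cofinal (ColoredPartialIso A B) :=
    Sum.elim (definedAtLeft hB hBc) (definedAtRight hA hAc)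
  let I := idealOfCofinals default D
  have hF (a : α) : ∃ b, ∃ f ∈ I, (a, b) ∈ f.val.val := by
    obtain ⟨f, ⟨b, hb⟩, hf⟩ := cofinal_meets_idealOfCofinals default D (Sum.inl a)
    exact ⟨b, f, hf, hb⟩
  have hG (b : β) : ∃ a, ∃ f ∈ I, (a, b) ∈ f.val.val := by
    obtain ⟨f, ⟨a, ha⟩, hf⟩ := cofinal_meets_idealOfCofinals default D (Sum.inr b)
    exact ⟨a, f, hf, ha⟩
  choose F hF using hF
  choose G hG using hG
  have hcmp (a : α) (b : β) : cmp a (G b) = cmp (F a) b := by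
    obtain ⟨f, hf, ha⟩ := hF a
    obtain ⟨g, hg, hb⟩ := hG b
    obtain ⟨m, -, hfm, hgm⟩ := I.directed _ hf _ hg
    exact m.val.prop _ (hfm ha) _ (hgm hb)
  let e := OrderIso.ofCmpEqCmp F G hcmp
  refine ⟨e, Set.ext fun b => ?_⟩
  obtain ⟨a, rfl⟩ := e.surjective b
  obtain ⟨f, -, ha⟩ := hF a
  exact e.injective.mem_set_image.trans (f.prop _ ha)

end Order

end

/-- If `A` and `B` are (countable) subsets of `ℚ` such that `A`, `ℚ \ A`, `B` and
`ℚ \ B` are all dense in `ℚ`, then some order automorphism of `(ℚ, ≤)` maps `A` onto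
`B`. -/
theorem exists_orderAut_image_eq (A B : Set ℚ)
    (hA : DenseIn A) (hAc : DenseIn Aᶜ) (hB : DenseIn B) (hBc : DenseIn Bᶜ) :
    ∃ α : ℚ ≃o ℚ, (⇑α) '' A = B :=
  Order.exists_orderIso_image_eq hA hAc hB hBc
end

section
/- If A ⊆ ℚ is such that both A and ℚ \ A are dense in ℚ, then there exists an order automorphism α of ℚ with A ⊊ α(A). -/
namespace ColoredBF

open Order

/-- Find a point of a dense set strictly between two finite sets. -/
theorem denseIn_between {C : Set ℚ} (hC : DenseIn C) (lo hi : Finset ℚ)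
    (h : ∀ x ∈ lo, ∀ y ∈ hi, x < y) :
    ∃ m ∈ C, (∀ x ∈ lo, x < m) ∧ ∀ y ∈ hi, m < y := by
  by_cases nlo : lo.Nonempty <;> by_cases nhi : hi.Nonempty
  · obtain ⟨m, hm, h1, h2⟩ :=
      hC (lo.max' nlo) (hi.min' nhi) (h _ (lo.max'_mem nlo) _ (hi.min'_mem nhi))
    exact ⟨m, hm, fun x hx => lt_of_le_of_lt (lo.le_max' x hx) h1,
      fun y hy => lt_of_lt_of_le h2 (hi.min'_le y hy)⟩
  · obtain ⟨m, hm, h1, _⟩ := hC (lo.max' nlo) (lo.max' nlo + 1) (by linarith)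
    exact ⟨m, hm, fun x hx => lt_of_le_of_lt (lo.le_max' x hx) h1,
      fun y hy => absurd ⟨y, hy⟩ nhi⟩
  · obtain ⟨m, hm, _, h2⟩ := hC (hi.min' nhi - 1) (hi.min' nhi) (by linarith)
    exact ⟨m, hm, fun x hx => absurd ⟨x, hx⟩ nlo,
      fun y hy => lt_of_lt_of_le h2 (hi.min'_le y hy)⟩
  · obtain ⟨m, hm, _, _⟩ := hC 0 1 one_pos
    exact ⟨m, hm, fun x hx => absurd ⟨x, hx⟩ nlo, fun y hy => absurd ⟨y, hy⟩ nhi⟩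

variable (A B : Set ℚ)

/-- Colored partial isomorphisms: finite order-respecting pairings that also
respect the colors given by `A` and `B`. -/
def CPI : Type :=
  { f : Finset (ℚ × ℚ) //
    (∀ p ∈ f, ∀ q ∈ f, cmp (Prod.fst p) (Prod.fst q) = cmp (Prod.snd p) (Prod.snd q)) ∧
    ∀ p ∈ f, (Prod.fst p ∈ A ↔ Prod.snd p ∈ B) }

namespace CPI

instance : Inhabited (CPI A B) :=
  ⟨⟨∅, fun _ h => (Finset.notMem_empty _ h).elim, fun _ h => (Finset.notMem_empty _ h).elim⟩⟩

instance : Preorder (CPI A B) := Subtype.preorder _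

variable {A B}

theorem exists_across (hB : DenseIn B) (hB' : DenseIn Bᶜ) (f : CPI A B) (a : ℚ) :
    ∃ b : ℚ, (a ∈ A ↔ b ∈ B) ∧ ∀ p ∈ f.val, cmp (Prod.fst p) a = cmp (Prod.snd p) b := by
  by_cases h : ∃ b, (a, b) ∈ f.val
  · obtain ⟨b, hb⟩ := h
    exact ⟨b, f.prop.2 _ hb, fun p hp => f.prop.1 _ hp _ hb⟩
  have key :
      ∀ x ∈ (f.val.filter fun p : ℚ × ℚ => p.fst < a).image Prod.snd,
        ∀ y ∈ (f.val.filter fun p : ℚ × ℚ => a < p.fst).image Prod.snd, x < y := by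
    intro x hx y hy
    rw [Finset.mem_image] at hx hy
    rcases hx with ⟨p, hp1, rfl⟩
    rcases hy with ⟨q, hq1, rfl⟩
    rw [Finset.mem_filter] at hp1 hq1
    rw [← lt_iff_lt_of_cmp_eq_cmp (f.prop.1 _ hp1.1 _ hq1.1)]
    exact lt_trans hp1.right hq1.right
  have main : ∃ b, (a ∈ A ↔ b ∈ B) ∧
      (∀ x ∈ (f.val.filter fun p : ℚ × ℚ => p.fst < a).image Prod.snd, x < b) ∧
      ∀ y ∈ (f.val.filter fun p : ℚ × ℚ => a < p.fst).image Prod.snd, b < y := by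
    by_cases ha : a ∈ A
    · obtain ⟨b, hbC, hb1, hb2⟩ := denseIn_between hB _ _ key
      exact ⟨b, by simp [ha, hbC], hb1, hb2⟩
    · obtain ⟨b, hbC, hb1, hb2⟩ := denseIn_between hB' _ _ key
      exact ⟨b, by simp [ha]; exact hbC, hb1, hb2⟩
  obtain ⟨b, hbC, hb1, hb2⟩ := main
  refine ⟨b, hbC, ?_⟩
  rintro ⟨p1, p2⟩ hp
  have hne : p1 ≠ a := fun he => h ⟨p2, he ▸ hp⟩
  rcases lt_or_gt_of_ne hne with hl | hr
  · have : p1 < a ∧ p2 < b :=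
      ⟨hl, hb1 _ (Finset.mem_image.mpr ⟨(p1, p2), Finset.mem_filter.mpr ⟨hp, hl⟩, rfl⟩)⟩
    rw [← cmp_eq_lt_iff, ← cmp_eq_lt_iff] at this
    exact this.1.trans this.2.symm
  · have : a < p1 ∧ b < p2 :=
      ⟨hr, hb2 _ (Finset.mem_image.mpr ⟨(p1, p2), Finset.mem_filter.mpr ⟨hp, hr⟩, rfl⟩)⟩
    rw [← cmp_eq_gt_iff, ← cmp_eq_gt_iff] at this
    exact this.1.trans this.2.symm

/-- Swap the two sides of a colored partial isomorphism. -/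
protected def comm (f : CPI A B) : CPI B A := by
  refine ⟨f.val.image (Equiv.prodComm ℚ ℚ), ?_, ?_⟩
  · intro p hp q hq
    rw [← Finset.mem_coe, Finset.coe_image, Equiv.image_eq_preimage_symm] at hp hq
    exact (f.prop.1 _ hp _ hq).symm
  · intro p hp
    rw [← Finset.mem_coe, Finset.coe_image, Equiv.image_eq_preimage_symm] at hp
    exact (f.prop.2 _ hp).symm

/-- Partial isomorphisms defined at `a` on the left form a cofinal set. -/
def definedAtLeft (hB : DenseIn B) (hB' : DenseIn Bᶜ) (a : ℚ) : Cofinal (CPI A B) where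
  carrier := {f | ∃ b : ℚ, (a, b) ∈ f.val}
  isCofinal f := by
    obtain ⟨b, hcol, a_b⟩ := exists_across hB hB' f a
    refine ⟨⟨insert (a, b) f.val, fun p hp q hq => ?_, fun p hp => ?_⟩,
      ⟨b, Finset.mem_insert_self _ _⟩, Finset.subset_insert _ _⟩
    · rw [Finset.mem_insert] at hp hq
      rcases hp with (rfl | pf) <;> rcases hq with (rfl | qf)
      · simp only [cmp_self_eq_eq]
      · rw [cmp_eq_cmp_symm]; exact a_b _ qf
      · exact a_b _ pf
      · exact f.prop.1 _ pf _ qf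
    · rw [Finset.mem_insert] at hp
      rcases hp with rfl | pf
      · exact hcol
      · exact f.prop.2 _ pf

/-- Partial isomorphisms defined at `b` on the right form a cofinal set. -/
def definedAtRight (hA : DenseIn A) (hA' : DenseIn Aᶜ) (b : ℚ) : Cofinal (CPI A B) where
  carrier := {f | ∃ a, (a, b) ∈ f.val}
  isCofinal f := by
    rcases (definedAtLeft hA hA' b).isCofinal f.comm with ⟨f', ⟨a, ha⟩, hl⟩
    refine ⟨f'.comm, ⟨a, ?_⟩, ?_⟩
    · change (a, b) ∈ f'.val.image _
      rwa [← Finset.mem_coe, Finset.coe_image, Equiv.image_eq_preimage_symm]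
    · change _ ⊆ f'.val.image _
      intro p hp
      rw [← Finset.mem_coe, Finset.coe_image, Equiv.image_eq_preimage_symm]
      have : (Equiv.prodComm ℚ ℚ) p ∈ f.val.image (Equiv.prodComm ℚ ℚ) :=
        Finset.mem_image_of_mem _ hp
      simpa using hl this

end CPI

open CPI in
/-- The colored back-and-forth theorem: two dense codense subsets of `ℚ` are
related by an order automorphism. -/
theorem exists_iso (A B : Set ℚ) (hA : DenseIn A) (hA' : DenseIn Aᶜ)
    (hB : DenseIn B) (hB' : DenseIn Bᶜ) : ∃ α : ℚ ≃o ℚ, (⇑α) '' A = B := by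
  classical
  let to_cofinal : ℚ ⊕ ℚ → Cofinal (CPI A B) := fun p =>
    Sum.recOn p (definedAtLeft hB hB') (definedAtRight hA hA')
  let I : Ideal (CPI A B) := idealOfCofinals default to_cofinal
  have hF : ∀ a : ℚ, ∃ b, ∃ f ∈ I, (a, b) ∈ f.val := by
    intro a
    obtain ⟨f, ⟨b, hb⟩, hf⟩ := cofinal_meets_idealOfCofinals default to_cofinal (Sum.inl a)
    exact ⟨b, f, hf, hb⟩
  have hG : ∀ b : ℚ, ∃ a, ∃ f ∈ I, (a, b) ∈ f.val := by
    intro b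
    obtain ⟨f, ⟨a, ha⟩, hf⟩ := cofinal_meets_idealOfCofinals default to_cofinal (Sum.inr b)
    exact ⟨a, f, hf, ha⟩
  choose F F_spec using hF
  choose G G_spec using hG
  -- the key combination lemma
  have key : ∀ (a b a' b' : ℚ), (∃ f ∈ I, (a, b) ∈ f.val) → (∃ f ∈ I, (a', b') ∈ f.val) →
      cmp a a' = cmp b b' := by
    rintro a b a' b' ⟨f, hf, hab⟩ ⟨g, hg, hab'⟩
    rcases I.directed _ hf _ hg with ⟨m, _, fm, gm⟩
    exact m.prop.1 (a, b) (fm hab) (a', b') (gm hab')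
  let α : ℚ ≃o ℚ := OrderIso.ofCmpEqCmp F G (fun a b => by
    exact key a (F a) (G b) b (F_spec a) (G_spec b))
  refine ⟨α, ?_⟩
  have hmem : ∀ a b : ℚ, (∃ f ∈ I, (a, b) ∈ f.val) → (a ∈ A ↔ b ∈ B) := by
    rintro a b ⟨f, hf, hab⟩
    exact f.prop.2 _ hab
  have hαG : ∀ b : ℚ, α (G b) = b := fun b => α.apply_symm_apply b
  ext b
  constructor
  · rintro ⟨a, ha, rfl⟩
    exact (hmem a (F a) (F_spec a)).mp ha
  · intro hb
    refine ⟨G b, (hmem (G b) b (G_spec b)).mpr hb, hαG b⟩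

end ColoredBF

/-- If `A ⊆ ℚ` is such that both `A` and `ℚ \ A` are dense in `ℚ`, then there is an
order automorphism `α` of `ℚ` with `A ⊊ α(A)`. -/
theorem exists_orderAut_strict_grow (A : Set ℚ) (hA : DenseIn A) (hAc : DenseIn Aᶜ) :
    ∃ α : ℚ ≃o ℚ, A ⊂ (⇑α) '' A := by
  obtain ⟨r, hr, -, -⟩ := hAc 0 1 one_pos
  have hB : DenseIn (insert r A) := by
    intro a b hab
    obtain ⟨c, hc, h1, h2⟩ := hA a b hab
    exact ⟨c, Set.mem_insert_of_mem _ hc, h1, h2⟩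
  have hB' : DenseIn (insert r A)ᶜ := by
    intro a b hab
    obtain ⟨c, hc, h1, h2⟩ := hAc a b hab
    by_cases hcr : c = r
    · obtain ⟨d, hd, h3, h4⟩ := hAc a c h1
      refine ⟨d, ?_, h3, h4.trans h2⟩
      simp only [Set.mem_compl_iff, Set.mem_insert_iff, not_or]
      exact ⟨by rintro rfl; exact absurd hcr (ne_of_gt h4), hd⟩
    · refine ⟨c, ?_, h1, h2⟩
      simp only [Set.mem_compl_iff, Set.mem_insert_iff, not_or]
      exact ⟨hcr, hc⟩
  obtain ⟨α, hα⟩ := ColoredBF.exists_iso A (insert r A) hA hAc hB hB'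
  refine ⟨α, ?_⟩
  rw [hα]
  exact Set.ssubset_insert hr
end
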